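/- arXiv:1301.1672 — 2 statements merged into one kernel-verified Lean document; each statement's English description precedes it below -/
import Mathlib

section
/- The position consisting of a single mark in the center cell (1,1) is a P-position: after the first player opens in the center of the 3×3 board, the player then to move (the second player) loses with best play. -/
/-- A cell of the 3×3 board. -/
abbrev Cell : Type := Fin 3 × Fin 3

/-- The 8 winning lines: 3 rows, 3 columns, 2 main diagonals. -/
def notaktoLines : List (Finset Cell) :=
  [ {(0,0), (0,1), (0,2)}, {(1,0), (1,1), (1,2)}, {(2,0), (2,1), (2,2)},
    {(0,0), (1,0), (2,0)}, {(0,1), (1,1), (2,1)}, {(0,2), (1,2), (2,2)},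
    {(0,0), (1,1), (2,2)}, {(0,2), (1,1), (2,0)} ]

/-- A position is dead if it contains all three cells of some line. -/
def Dead (p : Finset Cell) : Prop := ∃ l ∈ notaktoLines, l ⊆ p

/-- `FirstWins p` means the player to move from position `p` has a winning
strategy in misère X-only tic-tac-toe: there is a move to an unmarked cell
that does not complete a line (a move completing a line loses immediately)
and after which the opponent, now to move, has no winning strategy. -/
def FirstWins (p : Finset Cell) : Prop :=
  ∃ x, ∃ _hx : x ∉ p, ¬ Dead (insert x p) ∧ ¬ FirstWins (insert x p)
termination_by 9 - p.card
decreasing_by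
  have h1 : (insert x p).card = p.card + 1 := Finset.card_insert_of_notMem _hx
  have h2 : (insert x p).card ≤ 9 := by
    simpa using Finset.card_le_univ (insert x p)
  omega

/-!
After the center opening, the first player answers every move of the opponent by a
suitable knight's move away from it. Such a reply is always unmarked and safe, and after
two rounds the five marked cells leave no safe cell, so the opponent is forced to
complete a line.
-/

instance : DecidablePred Dead := fun p =>
  inferInstanceAs (Decidable (∃ l ∈ notaktoLines, l ⊆ p))

theorem firstWins_iff {p : Finset Cell} :
    FirstWins p ↔ ∃ x ∉ p, ¬ Dead (insert x p) ∧ ¬ FirstWins (insert x p) := by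
  rw [FirstWins]
  simp only [exists_prop]

/-- The player to move at `p` is left without a safe move after at most `n` rounds of
answering each of their moves `x` by `r x`. -/
def LosesAgainst (r : Cell → Cell) : ℕ → Finset Cell → Prop
  | 0, p => ∀ x ∉ p, Dead (insert x p)
  | n + 1, p => ∀ x ∉ p, ¬ Dead (insert x p) →
      r x ∉ insert x p ∧ ¬ Dead (insert (r x) (insert x p)) ∧
        LosesAgainst r n (insert (r x) (insert x p))

instance LosesAgainst.instDecidable (r : Cell → Cell) :
    ∀ n p, Decidable (LosesAgainst r n p)
  | 0, p => inferInstanceAs (Decidable (∀ x ∉ p, Dead (insert x p)))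
  | n + 1, p =>
    have := LosesAgainst.instDecidable r n
    inferInstanceAs (Decidable (∀ x ∉ p, ¬ Dead (insert x p) →
      r x ∉ insert x p ∧ ¬ Dead (insert (r x) (insert x p)) ∧
        LosesAgainst r n (insert (r x) (insert x p))))

theorem LosesAgainst.not_firstWins {r : Cell → Cell} :
    ∀ {n : ℕ} {p : Finset Cell}, LosesAgainst r n p → ¬ FirstWins p
  | 0, p, hstuck, hwin => by
    obtain ⟨x, hx, hsafe, -⟩ := firstWins_iff.mp hwin
    exact hsafe (hstuck x hx)
  | n + 1, p, hloses, hwin => by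
    obtain ⟨x, hx, hsafe, hlose⟩ := firstWins_iff.mp hwin
    obtain ⟨hfree, hreply, hnext⟩ := hloses x hx hsafe
    exact hlose (firstWins_iff.mpr ⟨r x, hfree, hreply, hnext.not_firstWins⟩)

/-- A knight's move away from each non-center cell; the center entry is never used. -/
def knightReply (x : Cell) : Cell :=
  ![![(1, 2), (2, 0), (2, 1)],
    ![(2, 2), (1, 1), (0, 0)],
    ![(0, 1), (0, 2), (1, 0)]] x.1 x.2

theorem losesAgainst_knightReply_center : LosesAgainst knightReply 2 {(1, 1)} := by
  decide

/-- The single center mark is a P-position: after a first move in the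
center cell (1,1), the player then to move loses with best play. -/
theorem center_opening_P_position :
    ¬ Dead ({((1 : Fin 3), (1 : Fin 3))} : Finset Cell) ∧
      ¬ FirstWins ({((1 : Fin 3), (1 : Fin 3))} : Finset Cell) :=
  ⟨by decide, losesAgainst_knightReply_center.not_firstWins⟩
end

section
/- The diametrically-opposite reply refutes a non-center opening: for every cell x of the 3×3 board with x ≠ (1,1), letting x' denote the image of x under 180-degree rotation of the board about the center (so x' = (2,2) - x coordinatewise), the two-mark position {x, x'} is a P-position. -/
/-!
The second player answers every move `y` by its mirror image `rot y` under the half-turn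
about the center. The center itself is never playable, since together with the opening pair
`{x, rot x}` it completes a line. The mirror reply never completes a line either: a line
through both `y` and `rot y` passes through the unmarked center, and a line completed by
`rot y` alone would have a mirror image already completed by `y`. So the first player is the
one who eventually runs out of safe moves.
-/

def Cell.rot (c : Cell) : Cell := (2 - c.1, 2 - c.2)

namespace Cell

@[simp]
theorem rot_rot (c : Cell) : c.rot.rot = c := by
  revert c; decide

@[simp]
theorem rot_center : rot (1, 1) = (1, 1) := rfl

theorem rot_ne_self {c : Cell} (hc : c ≠ (1, 1)) : c.rot ≠ c := by
  revert c; decide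

end Cell

open Cell

set_option maxRecDepth 10000 in
theorem card_eq_three_of_mem_notaktoLines : ∀ l ∈ notaktoLines, l.card = 3 := by
  decide

set_option maxRecDepth 10000 in
theorem image_rot_mem_notaktoLines : ∀ l ∈ notaktoLines, l.image rot ∈ notaktoLines := by
  decide

set_option maxRecDepth 10000 in
theorem center_mem_of_rot_mem_line :
    ∀ l ∈ notaktoLines, ∀ c : Cell, c ∈ l → c.rot ∈ l → (1, 1) ∈ l := by
  decide

set_option maxRecDepth 10000 in
theorem dead_rot_pair_with_center : ∀ c : Cell, c ≠ (1, 1) → Dead {c, (1, 1), c.rot} := by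
  unfold Dead; decide

theorem Dead.mono {p q : Finset Cell} (hp : Dead p) (hpq : p ⊆ q) : Dead q :=
  let ⟨l, hl, hlp⟩ := hp
  ⟨l, hl, hlp.trans hpq⟩

theorem not_dead_of_card_le_two {p : Finset Cell} (hp : p.card ≤ 2) : ¬ Dead p := by
  rintro ⟨l, hl, hlp⟩
  have := Finset.card_le_card hlp
  rw [card_eq_three_of_mem_notaktoLines l hl] at this
  omega

def RotInvariant (p : Finset Cell) : Prop := ∀ c ∈ p, c.rot ∈ p

theorem rotInvariant_pair (x : Cell) : RotInvariant {x, x.rot} := by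
  simp [RotInvariant, or_comm]

theorem RotInvariant.insert_rot_insert {p : Finset Cell} (hp : RotInvariant p) (y : Cell) :
    RotInvariant (insert y.rot (insert y p)) := by
  intro c hc
  simp only [Finset.mem_insert] at hc ⊢
  rcases hc with rfl | rfl | hc
  · simp
  · simp
  · exact Or.inr (Or.inr (hp c hc))

theorem not_dead_insert_rot {p : Finset Cell} {y : Cell} (hsymm : RotInvariant p)
    (hcenter : (1, 1) ∉ p) (hy : y ≠ (1, 1)) (hyp : ¬ Dead (insert y p)) :
    ¬ Dead (insert y.rot (insert y p)) := by
  rintro ⟨l, hl, hlp⟩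
  by_cases hrot : y.rot ∈ l
  · by_cases hyl : y ∈ l
    · have hc := hlp (center_mem_of_rot_mem_line l hl y hyl hrot)
      simp only [Finset.mem_insert] at hc
      rcases hc with hc | hc | hc
      · exact hy (by simpa using congrArg rot hc.symm)
      · exact hy hc.symm
      · exact hcenter hc
    · refine hyp ⟨l.image rot, image_rot_mem_notaktoLines l hl, ?_⟩
      intro c hc
      obtain ⟨d, hdl, rfl⟩ := Finset.mem_image.mp hc
      have hd := hlp hdl
      simp only [Finset.mem_insert] at hd ⊢
      rcases hd with rfl | rfl | hd
      · exact Or.inl (rot_rot y)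
      · exact absurd hdl hyl
      · exact Or.inr (hsymm d hd)
  · refine hyp ⟨l, hl, fun c hc => ?_⟩
    have := hlp hc
    rw [Finset.mem_insert] at this
    exact this.resolve_left (by rintro rfl; exact hrot hc)

theorem not_firstWins_of_rotInvariant {p : Finset Cell} {x : Cell} (hx : x ≠ (1, 1))
    (hxp : x ∈ p) (hsymm : RotInvariant p) (hp : ¬ Dead p) : ¬ FirstWins p := by
  have hcenter_dead : ∀ q, p ⊆ q → (1, 1) ∈ q → Dead q := fun q hpq hq =>
    (dead_rot_pair_with_center x hx).mono <| by
      simp only [Finset.insert_subset_iff, Finset.singleton_subset_iff]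
      exact ⟨hpq hxp, hq, hpq (hsymm x hxp)⟩
  rw [FirstWins]
  rintro ⟨y, hy, hyp, hwin⟩
  have hy_center : y ≠ (1, 1) := by
    rintro rfl; exact hyp (hcenter_dead _ (Finset.subset_insert _ _) (Finset.mem_insert_self _ _))
  have hrot_new : y.rot ∉ insert y p := by
    rw [Finset.mem_insert, not_or]
    exact ⟨rot_ne_self hy_center, fun h => hy (by simpa using hsymm _ h)⟩
  have hrot_safe : ¬ Dead (insert y.rot (insert y p)) :=
    not_dead_insert_rot hsymm (fun h => hp (hcenter_dead p subset_rfl h)) hy_center hyp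
  apply hwin
  rw [FirstWins]
  exact ⟨y.rot, hrot_new, hrot_safe, not_firstWins_of_rotInvariant hx
    (Finset.mem_insert_of_mem (Finset.mem_insert_of_mem hxp)) (hsymm.insert_rot_insert y) hrot_safe⟩
termination_by 9 - p.card
decreasing_by
  have := Finset.card_le_univ (insert y.rot (insert y p))
  rw [Finset.card_insert_of_notMem hrot_new, Finset.card_insert_of_notMem hy] at *
  simp only [Fintype.card_prod, Fintype.card_fin] at this
  omega

/-- The diametrically-opposite reply refutes a non-center opening: for every
cell x ≠ (1,1), with x' its image under 180-degree rotation about the center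
(x' = (2,2) - x coordinatewise), the position {x, x'} is a P-position. -/
theorem opposite_reply_P_position :
    ∀ x : Cell, x ≠ (1, 1) →
      ¬ Dead ({x, (2 - x.1, 2 - x.2)} : Finset Cell) ∧
        ¬ FirstWins ({x, (2 - x.1, 2 - x.2)} : Finset Cell) := by
  intro x hx
  show ¬ Dead {x, x.rot} ∧ ¬ FirstWins {x, x.rot}
  have hp : ¬ Dead {x, x.rot} := not_dead_of_card_le_two Finset.card_le_two
  exact ⟨hp, not_firstWins_of_rotInvariant hx (Finset.mem_insert_self _ _) (rotInvariant_pair x) hp⟩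
end
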